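/- arXiv:1808.00227 — 2 statements merged into one kernel-verified Lean document; each statement's English description precedes it below -/
import Mathlib

section
/- For every complex number q with 0 < |q| < 1, | Σ_{m≥1} q^m / (m(1 − q^m)) | ≤ Σ_{m≥1} |q|^m / (m(1 − |q|^m)) − |q| ( 1/(1 − |q|) − 1/|1 − q| ). Equivalently, |Log(1/(q;q)_∞)| ≤ Log(1/(|q|;|q|)_∞) − |q|( 1/(1−|q|) − 1/|1−q| ). -/
/-!
Bound the series termwise: from `‖1 - q ^ n‖ ≥ 1 - ‖q‖ ^ n` the `m`-th term has norm at most
`‖q‖ ^ m / (m (1 - ‖q‖ ^ m))`, the corresponding term of the real series. For `m = 1` we keep the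
exact norm `‖q‖ / ‖1 - q‖` instead, and the difference between the two first terms is the
correction `‖q‖ (1 / (1 - ‖q‖) - 1 / ‖1 - q‖)`.
-/

theorem norm_tsum_le_tsum_sub_of_norm_le {ι E : Type*} [SeminormedAddCommGroup E]
    {f : ι → E} {g : ι → ℝ} (hg : Summable g) (hfg : ∀ j, ‖f j‖ ≤ g j) (i : ι) :
    ‖∑' j, f j‖ ≤ ∑' j, g j - (g i - ‖f i‖) := by
  classical
  have hsum := hg.hasSum.update i ‖f i‖
  rw [show ‖f i‖ - g i + ∑' j, g j = ∑' j, g j - (g i - ‖f i‖) by ring] at hsum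
  refine tsum_of_norm_bounded hsum fun j => ?_
  rcases eq_or_ne j i with rfl | hji
  · simp
  · simpa [Function.update_of_ne hji] using hfg j

theorem one_sub_norm_pow_le_norm_one_sub_pow {R : Type*} [SeminormedRing R] [NormOneClass R]
    (x : R) (n : ℕ) : 1 - ‖x‖ ^ n ≤ ‖1 - x ^ n‖ :=
  calc 1 - ‖x‖ ^ n ≤ ‖(1 : R)‖ - ‖x ^ n‖ := by
        rw [norm_one]; linarith [norm_pow_le x n]
    _ ≤ ‖1 - x ^ n‖ := norm_sub_norm_le _ _

section
variable {𝕜 : Type*} [NormedDivisionRing 𝕜] [NormSMulClass ℤ 𝕜]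

theorem norm_pow_div_mul_one_sub_pow (q : 𝕜) (n : ℕ) :
    ‖q ^ n / (n * (1 - q ^ n))‖ = ‖q‖ ^ n / (n * ‖1 - q ^ n‖) := by
  rw [norm_div, norm_mul, norm_pow, norm_natCast]

theorem norm_pow_div_mul_one_sub_pow_le {q : 𝕜} (hq : ‖q‖ < 1) {n : ℕ} (hn : n ≠ 0) :
    ‖q ^ n / (n * (1 - q ^ n))‖ ≤ ‖q‖ ^ n / (n * (1 - ‖q‖ ^ n)) := by
  have hden : 0 < 1 - ‖q‖ ^ n := sub_pos.2 (pow_lt_one₀ (norm_nonneg q) hq hn)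
  rw [norm_pow_div_mul_one_sub_pow]
  gcongr
  exact one_sub_norm_pow_le_norm_one_sub_pow q n

end

theorem summable_pow_div_mul_one_sub_pow {r : ℝ} (hr0 : 0 ≤ r) (hr1 : r < 1) :
    Summable fun m : ℕ => r ^ (m + 1) / ((m + 1) * (1 - r ^ (m + 1))) := by
  have hden (m : ℕ) : 1 - r ≤ 1 - r ^ (m + 1) := by
    linarith [pow_le_of_le_one hr0 hr1.le (Nat.add_one_ne_zero m)]
  refine (((summable_geometric_of_lt_one hr0 hr1).mul_left r).div_const (1 - r)).of_nonneg_of_le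
    (fun m => ?_) (fun m => ?_)
  · have : 0 ≤ 1 - r ^ (m + 1) := by linarith [hden m]
    positivity
  · rw [← pow_succ']
    gcongr
    exact (hden m).trans (le_mul_of_one_le_left (by linarith [hden m]) (by simp))

open Finset Real Complex

theorem log_eulerProd_inv_bound_general (q : ℂ)
    (hq1 : ‖q‖ < 1) :
    ‖∑' m : ℕ, q ^ (m + 1) / ((m + 1 : ℕ) * (1 - q ^ (m + 1)))‖ ≤
      (∑' m : ℕ, ‖q‖ ^ (m + 1) / ((m + 1) * (1 - ‖q‖ ^ (m + 1)))) -
        ‖q‖ * (1 / (1 - ‖q‖) - 1 / ‖1 - q‖) := by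
  have hterm (m : ℕ) : ‖q ^ (m + 1) / ((m + 1 : ℕ) * (1 - q ^ (m + 1)))‖ ≤
      ‖q‖ ^ (m + 1) / ((m + 1) * (1 - ‖q‖ ^ (m + 1))) := by
    rw [← Nat.cast_add_one]
    exact norm_pow_div_mul_one_sub_pow_le hq1 (Nat.add_one_ne_zero m)
  convert norm_tsum_le_tsum_sub_of_norm_le
    (summable_pow_div_mul_one_sub_pow (norm_nonneg q) hq1) hterm 0 using 2
  rw [norm_pow_div_mul_one_sub_pow]
  simp only [zero_add, pow_one, Nat.cast_zero, Nat.cast_one, one_mul]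
  ring

theorem log_eulerProd_inv_bound (q : ℂ) (hq0 : 0 < ‖q‖)
    (hq1 : ‖q‖ < 1) :
    ‖∑' m : ℕ, q ^ (m + 1) / ((m + 1 : ℕ) * (1 - q ^ (m + 1)))‖ ≤
      (∑' m : ℕ, ‖q‖ ^ (m + 1) / ((m + 1) * (1 - ‖q‖ ^ (m + 1)))) -
        ‖q‖ * (1 / (1 - ‖q‖) - 1 / ‖1 - q‖) :=
  log_eulerProd_inv_bound_general q hq1
end

section
/- For all positive integers n and k, M_k(n) ≥ 0. -/
/-! Write `pent j = j(3j+1)/2`. Splitting the sum over `j < k` into the indices `j` and `-1 - j`,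
`M_k(n)` becomes the signed count of pairs `(j, λ)` with `-k ≤ j < k` and `λ ⊢ n - pent j`, the
sign being `+` when `j + k` is odd. The Bressoud–Zeilberger involution on such pairs (the
combinatorial proof of Euler's pentagonal number theorem) moves `j` by `±1`, hence reverses the
sign, and has no fixed point when `n ≠ 0`. It matches every negative pair of the window with a
positive one, except the pairs at `j = -k` that it pushes down to `-k - 1`; these are those with
rank `≤ -3k`, and `λ ↦ λ' ∪ {2k - 1}` (`λ'` the conjugate) maps them injectively to the positive
pairs at `j = k - 1` that the involution pushes up to `k`, which are not matched with anything
else. -/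

open Finset

/-- The number of partitions of `m`. -/
noncomputable def partitionCount (m : ℕ) : ℕ := Nat.card (Nat.Partition m)

/-- The partition function extended to integers, `p(m) = 0` for `m < 0`. -/
noncomputable def pZ (m : ℤ) : ℤ := if 0 ≤ m then (partitionCount m.toNat : ℤ) else 0

/-- The Andrews–Merca function `M_k(n)`. -/
noncomputable def andrewsMercaM (k : ℕ) (n : ℤ) : ℤ :=
  (-1) ^ (k - 1) * ∑ j ∈ Finset.range k,
    (-1) ^ j * (pZ (n - (j : ℤ) * (3 * j + 1) / 2) - pZ (n - (j : ℤ) * (3 * j + 5) / 2 - 1))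

namespace AndrewsMerca

def pent (j : ℤ) : ℤ := j * (3 * j + 1) / 2

theorem two_mul_pent (j : ℤ) : 2 * pent j = j * (3 * j + 1) :=
  Int.two_mul_ediv_two_of_even (by grind)

theorem pent_add_one (j : ℤ) : pent (j + 1) = pent j + (3 * j + 2) := by
  linarith [two_mul_pent (j + 1), two_mul_pent j]

theorem pent_sub_one (j : ℤ) : pent (j - 1) = pent j - (3 * j - 1) := by
  linarith [two_mul_pent (j - 1), two_mul_pent j]

theorem pent_neg (j : ℤ) : pent (-j) = pent (j - 1) + (2 * j - 1) := by
  linarith [two_mul_pent (-j), two_mul_pent (j - 1)]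

theorem pent_neg_one_sub (i : ℤ) : pent (-1 - i) = i * (3 * i + 5) / 2 + 1 := by
  rw [show i * (3 * i + 5) = i * (3 * i + 1) + 2 * (2 * i) by ring,
    Int.add_mul_ediv_left _ _ two_ne_zero]
  change _ = pent i + 2 * i + 1
  linarith [two_mul_pent (-1 - i), two_mul_pent i]

noncomputable def partitionsOf (N : ℤ) : Finset (Multiset ℕ) :=
  if 0 ≤ N then (univ : Finset N.toNat.Partition).image Nat.Partition.parts else ∅

theorem mem_partitionsOf {N : ℤ} {s : Multiset ℕ} :
    s ∈ partitionsOf N ↔ (s.sum : ℤ) = N ∧ 0 ∉ s := by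
  unfold partitionsOf
  split_ifs with hN
  · simp only [mem_image, mem_univ, true_and]
    constructor
    · rintro ⟨p, rfl⟩
      exact ⟨by rw [p.parts_sum, Int.toNat_of_nonneg hN], fun h => (p.parts_pos h).ne' rfl⟩
    · rintro ⟨hsum, hs⟩
      exact ⟨⟨s, fun hi => Nat.pos_of_ne_zero (ne_of_mem_of_not_mem hi hs), by omega⟩, rfl⟩
  · simp only [notMem_empty, false_iff, not_and]
    omega

theorem card_partitionsOf (N : ℤ) : (#(partitionsOf N) : ℤ) = pZ N := by
  unfold partitionsOf pZ partitionCount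
  split_ifs
  · rw [card_image_of_injective _ fun _ _ => Nat.Partition.ext, card_univ,
      Nat.card_eq_fintype_card]
  · simp

theorem sup_mem {s : Multiset ℕ} (hs : s ≠ 0) : s.sup ∈ s := by
  induction s using Multiset.induction with
  | empty => exact absurd rfl hs
  | cons a s ih =>
    rcases eq_or_ne s 0 with rfl | hs0
    · simp
    · rw [Multiset.sup_cons]
      exact sup_ind a s.sup (Multiset.mem_cons_self a s) (Multiset.mem_cons_of_mem (ih hs0))

theorem one_le_sup {s : Multiset ℕ} (hs : 0 ∉ s) (hs0 : s ≠ 0) : 1 ≤ s.sup :=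
  Nat.one_le_iff_ne_zero.2 (ne_of_mem_of_not_mem (sup_mem hs0) hs)

/-- Removes the first column of the Young diagram of `s`. -/
def peel (s : Multiset ℕ) : Multiset ℕ := (s.filter (2 ≤ ·)).map (· - 1)

def unpeel (t : Multiset ℕ) (m : ℕ) : Multiset ℕ := t.map (· + 1) + Multiset.replicate m 1

theorem peel_cons (a : ℕ) (s : Multiset ℕ) :
    peel (a ::ₘ s) = if 2 ≤ a then (a - 1) ::ₘ peel s else peel s := by
  unfold peel
  split_ifs with ha <;> simp [ha]

theorem zero_notMem_peel (s : Multiset ℕ) : 0 ∉ peel s := by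
  simp only [peel, Multiset.mem_map, Multiset.mem_filter, not_exists, not_and]
  omega

theorem card_peel_le (s : Multiset ℕ) : Multiset.card (peel s) ≤ Multiset.card s := by
  rw [peel, Multiset.card_map]
  exact Multiset.card_le_card (Multiset.filter_le _ _)

theorem sup_peel (s : Multiset ℕ) : (peel s).sup = s.sup - 1 := by
  induction s using Multiset.induction with
  | empty => rfl
  | cons a s ih =>
    rw [peel_cons]
    split_ifs <;> simp only [Multiset.sup_cons, ih] <;> omega

theorem sum_peel_add_card {s : Multiset ℕ} (hs : 0 ∉ s) :
    (peel s).sum + Multiset.card s = s.sum := by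
  induction s using Multiset.induction with
  | empty => rfl
  | cons a s ih =>
    rw [Multiset.mem_cons, not_or] at hs
    have := ih hs.2
    rw [peel_cons]
    split_ifs <;> simp only [Multiset.sum_cons, Multiset.card_cons] <;> omega

theorem sum_add_card_peel_le (s : Multiset ℕ) :
    (peel s).sum + Multiset.card (peel s) ≤ s.sum := by
  induction s using Multiset.induction with
  | empty => rfl
  | cons a s ih =>
    rw [peel_cons]
    split_ifs <;> simp only [Multiset.sum_cons, Multiset.card_cons] <;> omega

theorem peel_eq_zero_of_sup_le_one {s : Multiset ℕ} (hs : s.sup ≤ 1) : peel s = 0 := by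
  rw [peel, Multiset.map_eq_zero, Multiset.filter_eq_nil]
  exact fun a ha => by have := Multiset.le_sup ha; omega

theorem zero_notMem_unpeel (t : Multiset ℕ) (m : ℕ) : 0 ∉ unpeel t m := by
  simp [unpeel, Multiset.mem_replicate]

theorem card_unpeel (t : Multiset ℕ) (m : ℕ) :
    Multiset.card (unpeel t m) = Multiset.card t + m := by
  simp [unpeel]

theorem sup_unpeel_le (t : Multiset ℕ) (m : ℕ) : (unpeel t m).sup ≤ t.sup + 1 := by
  simp only [unpeel, Multiset.sup_add, sup_le_iff, Multiset.sup_le, Multiset.mem_map,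
    Multiset.mem_replicate]
  refine ⟨?_, fun b hb => by omega⟩
  rintro _ ⟨a, ha, rfl⟩
  exact Nat.succ_le_succ (Multiset.le_sup ha)

theorem peel_unpeel {t : Multiset ℕ} (ht : 0 ∉ t) (m : ℕ) : peel (unpeel t m) = t := by
  induction t using Multiset.induction with
  | empty => exact peel_eq_zero_of_sup_le_one (sup_unpeel_le 0 m)
  | cons a t ih =>
    rw [Multiset.mem_cons, not_or] at ht
    simp only [unpeel, Multiset.map_cons, Multiset.cons_add] at ih ⊢
    rw [peel_cons, if_pos (by omega), ih ht.2, Nat.add_sub_cancel]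

theorem unpeel_peel {s : Multiset ℕ} (hs : 0 ∉ s) :
    unpeel (peel s) (Multiset.card s - Multiset.card (peel s)) = s := by
  induction s using Multiset.induction with
  | empty => rfl
  | cons a s ih =>
    rw [Multiset.mem_cons, not_or] at hs
    have hle := card_peel_le s
    rw [peel_cons]
    split_ifs with ha
    · simp only [unpeel, Multiset.map_cons, Multiset.cons_add, Multiset.card_cons] at ih ⊢
      rw [Nat.sub_add_cancel (by omega), Nat.add_sub_add_right, ih hs.2]
    · simp only [unpeel, Multiset.card_cons] at ih ⊢
      rw [show Multiset.card s + 1 - Multiset.card (peel s)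
          = (Multiset.card s - Multiset.card (peel s)) + 1 by omega,
        Multiset.replicate_succ, Multiset.add_cons, ih hs.2, show a = 1 by omega]

/-- The conjugate partition: the first column of `s` becomes the first row. -/
def conj (s : Multiset ℕ) : Multiset ℕ :=
  if s = 0 then 0 else Multiset.card s ::ₘ conj (peel s)
termination_by s.sum + Multiset.card s
decreasing_by
  have := sum_add_card_peel_le s
  have := Multiset.card_pos.2 ‹_›
  omega

theorem conj_of_ne_zero {s : Multiset ℕ} (hs : s ≠ 0) :
    conj s = Multiset.card s ::ₘ conj (peel s) := by
  rw [conj, if_neg hs]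

theorem zero_notMem_conj (s : Multiset ℕ) : 0 ∉ conj s := by
  induction s using conj.induct with
  | case1 => simp [conj]
  | case2 s hs ih =>
    rw [conj_of_ne_zero hs, Multiset.mem_cons, not_or]
    exact ⟨(Multiset.card_pos.2 hs).ne, ih⟩

theorem sum_conj {s : Multiset ℕ} (hs : 0 ∉ s) : (conj s).sum = s.sum := by
  induction s using conj.induct with
  | case1 => simp [conj]
  | case2 s hs0 ih =>
    rw [conj_of_ne_zero hs0, Multiset.sum_cons, ih (zero_notMem_peel s), ← sum_peel_add_card hs,
      add_comm]

theorem sup_conj (s : Multiset ℕ) : (conj s).sup = Multiset.card s := by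
  induction s using conj.induct with
  | case1 => simp [conj]
  | case2 s hs ih =>
    rw [conj_of_ne_zero hs, Multiset.sup_cons, ih]
    exact max_eq_left (card_peel_le s)

theorem card_conj {s : Multiset ℕ} (hs : 0 ∉ s) : Multiset.card (conj s) = s.sup := by
  induction s using conj.induct with
  | case1 => simp [conj]
  | case2 s hs0 ih =>
    have := one_le_sup hs hs0
    rw [conj_of_ne_zero hs0, Multiset.card_cons, ih (zero_notMem_peel s), sup_peel]
    omega

theorem conj_injOn : Set.InjOn conj {s | 0 ∉ s} := by
  intro s hs t ht hst
  have hcard : Multiset.card s = Multiset.card t := by rw [← sup_conj s, ← sup_conj t, hst]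
  induction s using conj.induct generalizing t with
  | case1 => exact (Multiset.card_eq_zero.1 hcard.symm).symm
  | case2 s hs0 ih =>
    have ht0 : t ≠ 0 := Multiset.card_pos.1 (hcard ▸ Multiset.card_pos.2 hs0)
    rw [conj_of_ne_zero hs0, conj_of_ne_zero ht0, hcard, Multiset.cons_inj_right] at hst
    have hpeel := ih (zero_notMem_peel s) (zero_notMem_peel t) hst
      (by rw [← sup_conj, hst, sup_conj])
    rw [← unpeel_peel hs, ← unpeel_peel ht, hcard, hpeel]

def rank (s : Multiset ℕ) : ℤ := s.sup - Multiset.card s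

/-- The first column of `stepUp j s` has height `s.sup - 3j - 2`, so that the part added back by
`stepDown (j + 1)` is `s.sup + 1`, which the removal of the first column turns into `s.sup`. -/
def stepUp (j : ℤ) (s : Multiset ℕ) : Multiset ℕ :=
  unpeel (s.erase s.sup) ((s.sup : ℤ) - 3 * j - 2 - Multiset.card (s.erase s.sup)).toNat

def stepDown (j : ℤ) (s : Multiset ℕ) : Multiset ℕ :=
  peel ((Multiset.card s + 3 * j).toNat ::ₘ s)

section stepUp

variable {j : ℤ} {s : Multiset ℕ}

theorem card_stepUp (hj : 3 * j < rank s) :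
    (Multiset.card (stepUp j s) : ℤ) = s.sup - 3 * j - 2 := by
  rw [stepUp, card_unpeel]
  rcases eq_or_ne s 0 with rfl | hs0
  · simp only [rank, Multiset.sup_zero, Multiset.card_zero, Multiset.erase_zero,
      Nat.bot_eq_zero] at hj ⊢
    omega
  · have := Multiset.card_erase_add_one (sup_mem hs0)
    rw [rank] at hj
    omega

theorem peel_stepUp (hs : 0 ∉ s) : peel (stepUp j s) = s.erase s.sup :=
  peel_unpeel (fun h => hs (Multiset.mem_of_mem_erase h)) _

theorem zero_notMem_stepUp : 0 ∉ stepUp j s := zero_notMem_unpeel _ _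

theorem sum_stepUp (hs : 0 ∉ s) (hj : 3 * j < rank s) :
    ((stepUp j s).sum : ℤ) = s.sum - (3 * j + 2) := by
  have hpeel := sum_peel_add_card (zero_notMem_stepUp (j := j) (s := s))
  rw [peel_stepUp hs] at hpeel
  have hcard := card_stepUp hj
  have hsum : (s.erase s.sup).sum + s.sup = s.sum := by
    rcases eq_or_ne s 0 with rfl | hs0
    · rfl
    · rw [add_comm]
      exact Multiset.sum_erase (sup_mem hs0)
  omega

theorem rank_stepUp_le (hj : 3 * j < rank s) : rank (stepUp j s) ≤ 3 * (j + 1) := by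
  have hsup : (stepUp j s).sup ≤ s.sup + 1 :=
    (sup_unpeel_le _ _).trans
      (Nat.succ_le_succ (Multiset.sup_mono (Multiset.subset_of_le (Multiset.erase_le _ _))))
  rw [rank, card_stepUp hj]
  omega

theorem stepDown_stepUp (hs : 0 ∉ s) (hj : 3 * j < rank s) :
    stepDown (j + 1) (stepUp j s) = s := by
  have hpart : (Multiset.card (stepUp j s) + 3 * (j + 1)).toNat = s.sup + 1 := by
    rw [card_stepUp hj]
    omega
  rw [stepDown, hpart, peel_cons, peel_stepUp hs]
  rcases eq_or_ne s 0 with rfl | hs0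
  · rfl
  · rw [if_pos (by have := one_le_sup hs hs0; omega), Nat.add_sub_cancel]
    exact Multiset.cons_erase (sup_mem hs0)

end stepUp

section stepDown

variable {j : ℤ} {s : Multiset ℕ}

theorem one_le_card_add_three_mul (hs : 0 ∉ s) (hj : rank s ≤ 3 * j) (hjs : s ≠ 0 ∨ j ≠ 0) :
    1 ≤ (Multiset.card s : ℤ) + 3 * j := by
  rw [rank] at hj
  rcases eq_or_ne s 0 with rfl | hs0
  · simp only [Multiset.sup_zero, Multiset.card_zero, Nat.bot_eq_zero, ne_eq, not_true,
      false_or] at hj hjs ⊢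
    omega
  · have := one_le_sup hs hs0
    omega

theorem sum_stepDown (hs : 0 ∉ s) (hj : rank s ≤ 3 * j) (hjs : s ≠ 0 ∨ j ≠ 0) :
    ((stepDown j s).sum : ℤ) = s.sum + (3 * j - 1) := by
  have h1 := one_le_card_add_three_mul hs hj hjs
  have := sum_peel_add_card (s := (Multiset.card s + 3 * j).toNat ::ₘ s)
    (Multiset.mem_cons.not.2 (not_or.2 ⟨by omega, hs⟩))
  rw [Multiset.sum_cons, Multiset.card_cons, ← stepDown] at this
  omega

theorem sup_stepDown (hs : 0 ∉ s) (hj : rank s ≤ 3 * j) (hjs : s ≠ 0 ∨ j ≠ 0) :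
    ((stepDown j s).sup : ℤ) = Multiset.card s + 3 * j - 1 := by
  have h1 := one_le_card_add_three_mul hs hj hjs
  rw [rank] at hj
  rw [stepDown, sup_peel, Multiset.sup_cons, max_eq_left (by omega)]
  omega

theorem rank_stepDown (hs : 0 ∉ s) (hj : rank s ≤ 3 * j) (hjs : s ≠ 0 ∨ j ≠ 0) :
    3 * (j - 1) < rank (stepDown j s) := by
  have hcard := card_peel_le ((Multiset.card s + 3 * j).toNat ::ₘ s)
  rw [Multiset.card_cons, ← stepDown] at hcard
  rw [rank, sup_stepDown hs hj hjs]
  omega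

theorem erase_sup_stepDown (hs : 0 ∉ s) (hj : rank s ≤ 3 * j) (hjs : s ≠ 0 ∨ j ≠ 0) :
    (stepDown j s).erase (stepDown j s).sup = peel s := by
  have h1 := one_le_card_add_three_mul hs hj hjs
  have hsup := sup_stepDown hs hj hjs
  rw [rank] at hj
  rw [stepDown, peel_cons] at hsup ⊢
  set a := (Multiset.card s + 3 * j).toNat
  split_ifs at hsup ⊢
  · rw [show ((a - 1) ::ₘ peel s).sup = a - 1 by omega, Multiset.erase_cons_head]
  · rw [peel_eq_zero_of_sup_le_one (by omega), Multiset.erase_zero]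

theorem stepUp_stepDown (hs : 0 ∉ s) (hj : rank s ≤ 3 * j) (hjs : s ≠ 0 ∨ j ≠ 0) :
    stepUp (j - 1) (stepDown j s) = s := by
  have hm : ((stepDown j s).sup - 3 * (j - 1) - 2 - Multiset.card (peel s) : ℤ).toNat
      = Multiset.card s - Multiset.card (peel s) := by
    have := card_peel_le s
    rw [sup_stepDown hs hj hjs]
    omega
  rw [stepUp, erase_sup_stepDown hs hj hjs, hm, unpeel_peel hs]

end stepDown

/-- The Bressoud–Zeilberger involution on pairs `(j, λ)` with `λ ⊢ n - pent j`. -/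
def bz (x : ℤ × Multiset ℕ) : ℤ × Multiset ℕ :=
  if 3 * x.1 < rank x.2 then (x.1 + 1, stepUp x.1 x.2) else (x.1 - 1, stepDown x.1 x.2)

section bz

variable {n j : ℤ} {s : Multiset ℕ}

theorem bz_of_lt (h : 3 * j < rank s) : bz (j, s) = (j + 1, stepUp j s) := if_pos h

theorem bz_of_le (h : rank s ≤ 3 * j) : bz (j, s) = (j - 1, stepDown j s) := if_neg h.not_gt

theorem bz_bz (hs : 0 ∉ s) (hjs : s ≠ 0 ∨ j ≠ 0) : bz (bz (j, s)) = (j, s) := by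
  rcases lt_or_ge (3 * j) (rank s) with h | h
  · rw [bz_of_lt h, bz_of_le (by linarith [rank_stepUp_le h]), stepDown_stepUp hs h,
      add_sub_cancel_right]
  · rw [bz_of_le h, bz_of_lt (by linarith [rank_stepDown hs h hjs]), stepUp_stepDown hs h hjs,
      sub_add_cancel]

theorem ne_zero_or_ne_zero_of_mem_partitionsOf (hn : n ≠ 0)
    (h : s ∈ partitionsOf (n - pent j)) : s ≠ 0 ∨ j ≠ 0 := by
  rw [or_iff_not_imp_left, not_not]
  rintro rfl rfl
  simp [mem_partitionsOf, pent, hn.symm] at h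

theorem bz_mem_partitionsOf (hn : n ≠ 0) (h : s ∈ partitionsOf (n - pent j)) :
    (bz (j, s)).2 ∈ partitionsOf (n - pent (bz (j, s)).1) := by
  obtain ⟨hsum, hs⟩ := mem_partitionsOf.1 h
  rcases lt_or_ge (3 * j) (rank s) with hj | hj
  · rw [bz_of_lt hj, mem_partitionsOf, sum_stepUp hs hj, hsum, pent_add_one]
    exact ⟨by ring, zero_notMem_stepUp⟩
  · rw [bz_of_le hj, mem_partitionsOf,
      sum_stepDown hs hj (ne_zero_or_ne_zero_of_mem_partitionsOf hn h), hsum, pent_sub_one]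
    exact ⟨by ring, zero_notMem_peel _⟩

end bz

noncomputable def window (k : ℕ) (n : ℤ) : Finset (ℤ × Multiset ℕ) :=
  (Icc (-(k : ℤ)) (k - 1)).biUnion fun j => (partitionsOf (n - pent j)).image (Prod.mk j)

theorem mem_window {k : ℕ} {n : ℤ} {x : ℤ × Multiset ℕ} :
    x ∈ window k n ↔ x.1 ∈ Icc (-(k : ℤ)) (k - 1) ∧ x.2 ∈ partitionsOf (n - pent x.1) := by
  obtain ⟨j, s⟩ := x
  simp [window]

noncomputable def evenPairs (k : ℕ) (n : ℤ) : Finset (ℤ × Multiset ℕ) :=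
  (window k n).filter fun x => Even (x.1 + k)

noncomputable def oddPairs (k : ℕ) (n : ℤ) : Finset (ℤ × Multiset ℕ) :=
  (window k n).filter fun x => ¬Even (x.1 + k)

theorem sum_Icc_neg_eq_sum_range (f : ℤ → ℤ) (k : ℕ) :
    ∑ j ∈ Icc (-(k : ℤ)) (k - 1), f j = ∑ i ∈ range k, (f i + f (-1 - i)) := by
  induction k with
  | zero => simp
  | succ k ih =>
    have hIcc : Icc (-((k + 1 : ℕ) : ℤ)) ((k + 1 : ℕ) - 1)
        = insert (-1 - (k : ℤ)) (insert (k : ℤ) (Icc (-(k : ℤ)) (k - 1))) := by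
      ext x
      simp only [mem_Icc, mem_insert]
      omega
    rw [hIcc, sum_insert (by simp only [mem_insert, mem_Icc]; omega),
      sum_insert (by simp only [mem_Icc]; omega), ih, sum_range_succ]
    ring

theorem andrewsMercaM_eq_sum (k : ℕ) (n : ℤ) :
    andrewsMercaM k n
      = ∑ j ∈ Icc (-(k : ℤ)) (k - 1), (if Even (j + k) then -1 else 1) * pZ (n - pent j) := by
  rw [sum_Icc_neg_eq_sum_range, andrewsMercaM, mul_sum]
  refine sum_congr rfl fun i hi => ?_
  have hik : i < k := mem_range.1 hi
  rw [pent_neg_one_sub, sub_add_eq_sub_sub, ← mul_assoc, ← pow_add, pent]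
  rcases Nat.even_or_odd (k - 1 + i) with h | h
  · have h1 : ¬Even ((i : ℤ) + k) := by rw [Nat.even_iff] at h; rw [Int.even_iff]; omega
    have h2 : Even (-1 - (i : ℤ) + k) := by rw [Nat.even_iff] at h; rw [Int.even_iff]; omega
    rw [h.neg_one_pow, if_neg h1, if_pos h2]
    ring
  · have h1 : Even ((i : ℤ) + k) := by rw [Nat.odd_iff] at h; rw [Int.even_iff]; omega
    have h2 : ¬Even (-1 - (i : ℤ) + k) := by rw [Nat.odd_iff] at h; rw [Int.even_iff]; omega
    rw [h.neg_one_pow, if_pos h1, if_neg h2]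
    ring

theorem card_oddPairs_sub_card_evenPairs (k : ℕ) (n : ℤ) :
    (#(oddPairs k n) : ℤ) - #(evenPairs k n)
      = ∑ j ∈ Icc (-(k : ℤ)) (k - 1), (if Even (j + k) then -1 else 1) * pZ (n - pent j) := by
  have hsum : ∑ x ∈ window k n, (if Even (x.1 + k) then -1 else 1 : ℤ)
      = ∑ j ∈ Icc (-(k : ℤ)) (k - 1), (if Even (j + k) then -1 else 1) * pZ (n - pent j) := by
    rw [sum_finset_product _ _ (fun j => partitionsOf (n - pent j)) fun _ => mem_window]
    refine sum_congr rfl fun j _ => ?_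
    rw [← card_partitionsOf, mul_comm, ← nsmul_eq_mul, ← sum_const]
  rw [← hsum, sum_ite, sum_const, sum_const, evenPairs, oddPairs]
  simp only [nsmul_eq_mul, mul_neg, mul_one]
  ring

section injection

variable {k : ℕ} {n : ℤ}

theorem card_evenPairs_interior_le (hn : n ≠ 0) :
    #((evenPairs k n).filter fun x : ℤ × Multiset ℕ => ¬(x.1 = -k ∧ rank x.2 ≤ 3 * x.1))
      ≤ #((oddPairs k n).filter fun x : ℤ × Multiset ℕ => ¬(x.1 = k - 1 ∧ 3 * x.1 < rank x.2)) := by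
  refine card_le_card_of_injOn bz ?_ (Set.LeftInvOn.injOn (f₁' := bz) ?_)
  · rintro ⟨j, s⟩ hx
    simp only [evenPairs, oddPairs, coe_filter, Set.mem_ofPred_eq, mem_filter, mem_window,
      mem_Icc, Int.even_iff] at hx ⊢
    obtain ⟨⟨⟨⟨hj1, hj2⟩, hs⟩, hev⟩, hb⟩ := hx
    have hmem := bz_mem_partitionsOf hn hs
    rcases lt_or_ge (3 * j) (rank s) with h | h
    · rw [bz_of_lt h] at hmem ⊢
      dsimp only at hmem ⊢
      have := rank_stepUp_le h
      exact ⟨⟨⟨⟨by omega, by omega⟩, hmem⟩, by omega⟩, by omega⟩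
    · rw [bz_of_le h] at hmem ⊢
      dsimp only at hmem ⊢
      exact ⟨⟨⟨⟨by omega, by omega⟩, hmem⟩, by omega⟩, by omega⟩
  · rintro ⟨j, s⟩ hx
    simp only [evenPairs, coe_filter, Set.mem_ofPred_eq, mem_filter, mem_window] at hx
    exact bz_bz (mem_partitionsOf.1 hx.1.1.2).2
      (ne_zero_or_ne_zero_of_mem_partitionsOf hn hx.1.1.2)

/-- Conjugation turns rank `≤ -3k` into rank `≥ 3k`; the new part `2k - 1` makes up the
difference `pent (-k) - pent (k - 1)`. -/
theorem card_evenPairs_boundary_le :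
    #((evenPairs k n).filter fun x : ℤ × Multiset ℕ => x.1 = -k ∧ rank x.2 ≤ 3 * x.1)
      ≤ #((oddPairs k n).filter fun x : ℤ × Multiset ℕ => x.1 = k - 1 ∧ 3 * x.1 < rank x.2) := by
  refine card_le_card_of_injOn (fun x => ((k : ℤ) - 1, (2 * k - 1) ::ₘ conj x.2)) ?_ ?_
  · rintro ⟨j, s⟩ hx
    simp only [evenPairs, oddPairs, coe_filter, Set.mem_ofPred_eq, mem_filter, mem_window,
      mem_Icc, Int.even_iff] at hx ⊢
    obtain ⟨⟨⟨⟨hj1, hj2⟩, hs⟩, hev⟩, rfl, hr⟩ := hx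
    obtain ⟨hsum, hs0⟩ := mem_partitionsOf.1 hs
    have := pent_neg (k : ℤ)
    rw [rank] at hr
    refine ⟨⟨⟨⟨by omega, by omega⟩, mem_partitionsOf.2 ⟨?_, ?_⟩⟩, by omega⟩, trivial, ?_⟩
    · rw [Multiset.sum_cons, sum_conj hs0, Nat.cast_add]
      omega
    · rw [Multiset.mem_cons, not_or]
      exact ⟨by omega, zero_notMem_conj s⟩
    · rw [rank, Multiset.sup_cons, sup_conj, max_eq_right (by omega), Multiset.card_cons,
        card_conj hs0]
      push_cast
      omega
  · rintro ⟨j, s⟩ hx ⟨j', t⟩ hy h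
    simp only [evenPairs, coe_filter, Set.mem_ofPred_eq, mem_filter, mem_window] at hx hy
    simp only [Prod.mk.injEq, true_and, Multiset.cons_inj_right] at h
    rw [hx.2.1, hy.2.1,
      conj_injOn (mem_partitionsOf.1 hx.1.1.2).2 (mem_partitionsOf.1 hy.1.1.2).2 h]

theorem card_evenPairs_le_card_oddPairs (hn : n ≠ 0) : #(evenPairs k n) ≤ #(oddPairs k n) := by
  rw [← card_filter_add_card_filter_not (s := evenPairs k n)
      (fun x : ℤ × Multiset ℕ => x.1 = -k ∧ rank x.2 ≤ 3 * x.1),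
    ← card_filter_add_card_filter_not (s := oddPairs k n)
      (fun x : ℤ × Multiset ℕ => x.1 = k - 1 ∧ 3 * x.1 < rank x.2)]
  exact add_le_add card_evenPairs_boundary_le (card_evenPairs_interior_le hn)

end injection

end AndrewsMerca

open AndrewsMerca

theorem andrewsMercaM_nonneg_general (n : ℤ) (k : ℕ) (hn : 0 < n) :
    0 ≤ andrewsMercaM k n := by
  rw [andrewsMercaM_eq_sum, ← card_oddPairs_sub_card_evenPairs, sub_nonneg, Nat.cast_le]
  exact card_evenPairs_le_card_oddPairs hn.ne'

theorem andrewsMercaM_nonneg (n : ℤ) (k : ℕ) (hn : 0 < n) (hk : 0 < k) :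
    0 ≤ andrewsMercaM k n :=
  andrewsMercaM_nonneg_general n k hn
end
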